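/- There exists a numerical constant ℓ_m ≥ 1 (independent of T) such that for all T ≥ 2, the function f̄_m(x,z) = -Ψ(1)Φ(x₁) + Σ_{i=2}^{T}[Ψ(-z_i)Φ(-x_i) - Ψ(z_i)Φ(x_i)] + 6·Σ_{i=1}^{T-1}(x_i - (1/2)·z_{i+1})², defined on ℝ^T × ℝ^{T-1}, is ℓ_m-smooth: its gradient is ℓ_m-Lipschitz with respect to the Euclidean norm. -/

import Mathlib

/-
Ψ = e · flat(2x - 1), where flat(u) = exp(-1/u²) for u > 0 and 0 otherwise, and Φ is a scaled
Gaussian distribution function; both are C² with the function and its first two derivatives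
bounded. Apart from a term in x₁, f̄_m is a sum of terms each depending on only two coordinates,
(z_i, x_i) or (x_{i-1}, z_i), with partial derivatives Lipschitz in these two coordinates with a
constant independent of T. The gradient is thus a sum of vectors supported on these coordinate
pairs, and since each coordinate occurs in at most one pair of each family, squared norms add up
coordinatewise: the Lipschitz constant of the gradient does not depend on T.
-/

/-- `Ψ(x) = 0` for `x ≤ 1/2`, `exp(1 - 1/(2x-1)²)` for `x > 1/2`. -/
noncomputable def Psi (x : ℝ) : ℝ :=
  if x ≤ 1 / 2 then 0 else Real.exp (1 - 1 / (2 * x - 1) ^ 2)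

/-- `Φ(x) = √e · ∫_{-∞}^x e^{-t²/2} dt`. -/
noncomputable def Phi (x : ℝ) : ℝ :=
  Real.sqrt (Real.exp 1) * ∫ t in Set.Iic x, Real.exp (-t ^ 2 / 2)

/-- `f̄_m(x, z)` on the Euclidean space `ℝ^T × ℝ^{T-1}`.
Coordinate `Sum.inl j` is the math variable `x_{j+1}`; `Sum.inr j` is `z_{j+2}`. -/
noncomputable def fmE (T : ℕ) (hT : 2 ≤ T)
    (w : EuclideanSpace ℝ (Fin T ⊕ Fin (T - 1))) : ℝ :=
  -Psi 1 * Phi (w (Sum.inl ⟨0, by omega⟩))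
    + ∑ j : Fin (T - 1),
        (Psi (-w (Sum.inr j)) * Phi (-w (Sum.inl ⟨(j : ℕ) + 1, by have := j.isLt; omega⟩))
          - Psi (w (Sum.inr j)) * Phi (w (Sum.inl ⟨(j : ℕ) + 1, by have := j.isLt; omega⟩)))
    + 6 * ∑ j : Fin (T - 1),
        (w (Sum.inl ⟨(j : ℕ), by have := j.isLt; omega⟩) - (1 / 2) * w (Sum.inr j)) ^ 2

open Real Set Filter Topology
open scoped Nat

structure BddC2 (M : ℝ) (f f' f'' : ℝ → ℝ) : Prop where
  hasDerivAt : ∀ x, HasDerivAt f (f' x) x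
  hasDerivAt_deriv : ∀ x, HasDerivAt f' (f'' x) x
  abs_le : ∀ x, |f x| ≤ M
  abs_deriv_le : ∀ x, |f' x| ≤ M
  abs_deriv2_le : ∀ x, |f'' x| ≤ M

namespace BddC2

variable {M N : ℝ} {f f' f'' g g' g'' : ℝ → ℝ}

lemma comp_neg (hf : BddC2 M f f' f'') :
    BddC2 M (fun x => f (-x)) (fun x => -f' (-x)) (fun x => f'' (-x)) where
  hasDerivAt x := ((hf.hasDerivAt (-x)).comp x (hasDerivAt_neg x)).congr_deriv (by ring)
  hasDerivAt_deriv x :=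
    ((hf.hasDerivAt_deriv (-x)).comp x (hasDerivAt_neg x)).neg.congr_deriv (by ring)
  abs_le x := hf.abs_le (-x)
  abs_deriv_le x := by simpa using hf.abs_deriv_le (-x)
  abs_deriv2_le x := hf.abs_deriv2_le (-x)

lemma abs_sub_le (hf : BddC2 M f f' f'') (x y : ℝ) : |f x - f y| ≤ M * |x - y| := by
  simpa only [Real.norm_eq_abs] using convex_univ.norm_image_sub_le_of_norm_hasDerivWithin_le
    (fun z _ => (hf.hasDerivAt z).hasDerivWithinAt) (fun z _ => hf.abs_deriv_le z)
    (mem_univ y) (mem_univ x)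

lemma abs_deriv_sub_le (hf : BddC2 M f f' f'') (x y : ℝ) : |f' x - f' y| ≤ M * |x - y| := by
  simpa only [Real.norm_eq_abs] using convex_univ.norm_image_sub_le_of_norm_hasDerivWithin_le
    (fun z _ => (hf.hasDerivAt_deriv z).hasDerivWithinAt) (fun z _ => hf.abs_deriv2_le z)
    (mem_univ y) (mem_univ x)

lemma abs_deriv_mul_sub_le (hf : BddC2 M f f' f'') (hg : BddC2 N g g' g'') (s t s' t' : ℝ) :
    |f' s * g t - f' s' * g t'| ≤ M * N * (|s - s'| + |t - t'|) := by
  have hM : 0 ≤ M := (abs_nonneg _).trans (hf.abs_le 0)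
  have hN : 0 ≤ N := (abs_nonneg _).trans (hg.abs_le 0)
  calc |f' s * g t - f' s' * g t'|
      = |f' s * (g t - g t') + g t' * (f' s - f' s')| := by ring_nf
    _ ≤ |f' s| * |g t - g t'| + |g t'| * |f' s - f' s'| := by
      rw [← abs_mul, ← abs_mul]; exact abs_add_le _ _
    _ ≤ M * (N * |t - t'|) + N * (M * |s - s'|) := by
      gcongr
      exacts [hf.abs_deriv_le s, hg.abs_sub_le t t', hg.abs_le t', hf.abs_deriv_sub_le s s']
    _ = M * N * (|s - s'| + |t - t'|) := by ring

lemma abs_mul_deriv_sub_le (hf : BddC2 M f f' f'') (hg : BddC2 N g g' g'') (s t s' t' : ℝ) :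
    |f s * g' t - f s' * g' t'| ≤ M * N * (|s - s'| + |t - t'|) := by
  have h := hg.abs_deriv_mul_sub_le hf t s t' s'
  rw [mul_comm (g' t), mul_comm (g' t'), mul_comm N, add_comm] at h
  exact h

end BddC2

lemma hasDerivAt_zero_of_abs_le_sq {f : ℝ → ℝ} {C : ℝ} (h : ∀ x, |f x| ≤ C * x ^ 2) :
    HasDerivAt f 0 0 := by
  have hf0 : f 0 = 0 := by simpa using h 0
  rw [hasDerivAt_iff_isLittleO]
  refine (Asymptotics.IsBigO.of_bound C (Eventually.of_forall fun x => ?_)).trans_isLittleO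
    (Asymptotics.isLittleO_pow_sub_sub (0 : ℝ) one_lt_two)
  simpa [hf0] using h x

lemma hasDerivAt_of_vanishing_on_nonpos {f f' : ℝ → ℝ} {C : ℝ} (hf : ∀ u ≤ 0, f u = 0)
    (hf' : ∀ u ≤ 0, f' u = 0) (hpos : ∀ u, 0 < u → HasDerivAt f (f' u) u)
    (hsq : ∀ u, |f u| ≤ C * u ^ 2) (u : ℝ) : HasDerivAt f (f' u) u := by
  rcases lt_trichotomy u 0 with hu | rfl | hu
  · rw [hf' u hu.le]
    exact (hasDerivAt_const u 0).congr_of_eventuallyEq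
      (eventually_of_mem (Iio_mem_nhds hu) fun v hv => hf v (le_of_lt hv))
  · rw [hf' 0 le_rfl]
    exact hasDerivAt_zero_of_abs_le_sq hsq
  · exact hpos u hu

noncomputable def flat (u : ℝ) : ℝ := if u ≤ 0 then 0 else exp (-(u ^ 2)⁻¹)

-- These formulas hold for every `u`: `flat` vanishes for `u ≤ 0`, and `x / 0 = 0` at `u = 0`.
noncomputable def flatDeriv (u : ℝ) : ℝ := 2 * (flat u / u ^ 3)

noncomputable def flatDeriv2 (u : ℝ) : ℝ := 4 * (flat u / u ^ 6) - 6 * (flat u / u ^ 4)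

lemma flat_of_nonpos {u : ℝ} (hu : u ≤ 0) : flat u = 0 := if_pos hu

lemma flat_of_pos {u : ℝ} (hu : 0 < u) : flat u = exp (-(u ^ 2)⁻¹) := if_neg hu.not_ge

lemma flat_nonneg (u : ℝ) : 0 ≤ flat u := by
  unfold flat; split_ifs <;> positivity

lemma exp_neg_inv_sq_le {u : ℝ} (hu : 0 < u) (k : ℕ) : exp (-(u ^ 2)⁻¹) ≤ k ! * u ^ k := by
  have hk : (1 : ℝ) ≤ k ! := by exact_mod_cast k.factorial_pos
  rcases le_or_gt u 1 with hu1 | hu1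
  · have huk : u ^ k ≤ 1 := pow_le_one₀ hu.le hu1
    calc exp (-(u ^ 2)⁻¹) = (exp (u ^ 2)⁻¹)⁻¹ := exp_neg _
      _ ≤ (((u ^ 2)⁻¹) ^ k / k !)⁻¹ :=
          inv_anti₀ (by positivity) (pow_div_factorial_le_exp _ (by positivity) k)
      _ = k ! * u ^ k * u ^ k := by rw [inv_div, inv_pow, div_inv_eq_mul, ← pow_mul]; ring
      _ ≤ k ! * u ^ k := mul_le_of_le_one_right (by positivity) huk
  · calc exp (-(u ^ 2)⁻¹) ≤ 1 := exp_le_one_iff.2 (neg_nonpos.2 (by positivity))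
      _ ≤ u ^ k := one_le_pow₀ hu1.le
      _ ≤ k ! * u ^ k := le_mul_of_one_le_left (by positivity) hk

lemma abs_flat_div_pow_le (u : ℝ) (k m : ℕ) : |flat u / u ^ k| ≤ (k + m)! * |u| ^ m := by
  rcases le_or_gt u 0 with hu | hu
  · rw [flat_of_nonpos hu, zero_div, abs_zero]; positivity
  · rw [abs_of_nonneg (div_nonneg (flat_nonneg u) (by positivity)), abs_of_pos hu,
      div_le_iff₀ (by positivity), flat_of_pos hu, mul_assoc, ← pow_add, add_comm m]
    exact exp_neg_inv_sq_le hu _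

lemma abs_flat_le_sq (u : ℝ) : |flat u| ≤ 2 * u ^ 2 := by
  simpa using abs_flat_div_pow_le u 0 2

lemma abs_flatDeriv_le_sq (u : ℝ) : |flatDeriv u| ≤ 240 * u ^ 2 := by
  have h := abs_flat_div_pow_le u 3 2
  rw [sq_abs] at h
  rw [flatDeriv, abs_mul, abs_two]
  norm_num [Nat.factorial] at h
  linarith

lemma hasDerivAt_flat (u : ℝ) : HasDerivAt flat (flatDeriv u) u := by
  refine hasDerivAt_of_vanishing_on_nonpos (fun v => flat_of_nonpos) (fun v hv => ?_)
    (fun v hv => ?_) abs_flat_le_sq u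
  · rw [flatDeriv, flat_of_nonpos hv, zero_div, mul_zero]
  · have h := (((hasDerivAt_pow 2 v).inv (by positivity)).neg).exp
    refine (h.congr_of_eventuallyEq (eventually_of_mem (Ioi_mem_nhds hv)
      fun w hw => flat_of_pos hw)).congr_deriv ?_
    rw [flatDeriv, flat_of_pos hv]
    simp only [Pi.neg_apply, Pi.inv_apply]
    field_simp
    ring

lemma hasDerivAt_flatDeriv (u : ℝ) : HasDerivAt flatDeriv (flatDeriv2 u) u := by
  refine hasDerivAt_of_vanishing_on_nonpos (fun v hv => ?_) (fun v hv => ?_) (fun v hv => ?_)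
    abs_flatDeriv_le_sq u
  · rw [flatDeriv, flat_of_nonpos hv, zero_div, mul_zero]
  · rw [flatDeriv2, flat_of_nonpos hv, zero_div, zero_div, mul_zero, mul_zero, sub_zero]
  · have h := ((hasDerivAt_flat v).div (hasDerivAt_pow 3 v) (by positivity)).const_mul 2
    refine h.congr_deriv ?_
    rw [flatDeriv2, flatDeriv]
    field_simp
    ring

lemma bddC2_flat : BddC2 3024 flat flatDeriv flatDeriv2 where
  hasDerivAt := hasDerivAt_flat
  hasDerivAt_deriv := hasDerivAt_flatDeriv
  abs_le u := by
    have h := abs_flat_div_pow_le u 0 0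
    norm_num at h
    linarith
  abs_deriv_le u := by
    have h := abs_flat_div_pow_le u 3 0
    rw [flatDeriv, abs_mul, abs_two]
    norm_num [Nat.factorial] at h
    linarith
  abs_deriv2_le u := by
    have h6 := abs_flat_div_pow_le u 6 0
    have h4 := abs_flat_div_pow_le u 4 0
    norm_num [Nat.factorial] at h6 h4
    rw [flatDeriv2]
    refine (abs_sub _ _).trans ?_
    rw [abs_mul, abs_mul, abs_of_pos four_pos, abs_of_pos (by norm_num : (0 : ℝ) < 6)]
    linarith

lemma exp_one_le_three : exp 1 ≤ 3 := by linarith [exp_one_lt_d9]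

lemma psi_eq_exp_one_mul_flat (x : ℝ) : Psi x = exp 1 * flat (2 * x - 1) := by
  rcases le_or_gt x (1 / 2) with hx | hx
  · rw [Psi, if_pos hx, flat_of_nonpos (by linarith), mul_zero]
  · rw [Psi, if_neg hx.not_ge, flat_of_pos (by linarith), ← exp_add, one_div, sub_eq_add_neg]

noncomputable def psiDeriv (x : ℝ) : ℝ := 2 * exp 1 * flatDeriv (2 * x - 1)

noncomputable def psiDeriv2 (x : ℝ) : ℝ := 4 * exp 1 * flatDeriv2 (2 * x - 1)

lemma bddC2_psi : BddC2 36288 Psi psiDeriv psiDeriv2 where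
  hasDerivAt x := by
    rw [show Psi = fun x => exp 1 * flat (2 * x - 1) from funext psi_eq_exp_one_mul_flat]
    exact (((bddC2_flat.hasDerivAt _).comp x
      (((hasDerivAt_id' x).const_mul 2).sub_const 1)).const_mul (exp 1)).congr_deriv
      (by rw [psiDeriv]; ring)
  hasDerivAt_deriv x :=
    (((bddC2_flat.hasDerivAt_deriv _).comp x
      (((hasDerivAt_id' x).const_mul 2).sub_const 1)).const_mul (2 * exp 1)).congr_deriv
      (by rw [psiDeriv2]; ring)
  abs_le x := by
    rw [psi_eq_exp_one_mul_flat, abs_mul, abs_of_pos (exp_pos 1)]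
    nlinarith [bddC2_flat.abs_le (2 * x - 1), exp_one_le_three, abs_nonneg (flat (2 * x - 1))]
  abs_deriv_le x := by
    rw [psiDeriv, abs_mul, abs_of_pos (by positivity)]
    nlinarith [bddC2_flat.abs_deriv_le (2 * x - 1), exp_one_le_three,
      abs_nonneg (flatDeriv (2 * x - 1))]
  abs_deriv2_le x := by
    rw [psiDeriv2, abs_mul, abs_of_pos (by positivity)]
    nlinarith [bddC2_flat.abs_deriv2_le (2 * x - 1), exp_one_le_three,
      abs_nonneg (flatDeriv2 (2 * x - 1))]

noncomputable def phiDeriv (x : ℝ) : ℝ := sqrt (exp 1) * exp (-x ^ 2 / 2)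

lemma integrable_exp_neg_sq_div_two : MeasureTheory.Integrable fun t : ℝ => exp (-t ^ 2 / 2) := by
  simpa [neg_div, div_eq_inv_mul] using integrable_exp_neg_mul_sq (b := 1 / 2) (by norm_num)

lemma sqrt_exp_one_le_two : sqrt (exp 1) ≤ 2 :=
  Real.sqrt_le_iff.2 ⟨by norm_num, by linarith [exp_one_lt_d9]⟩

lemma hasDerivAt_phi (x : ℝ) : HasDerivAt Phi (phiDeriv x) x := by
  have hint : ∀ y, MeasureTheory.IntegrableOn (fun t : ℝ => exp (-t ^ 2 / 2)) (Iic y) :=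
    fun y => integrable_exp_neg_sq_div_two.integrableOn
  have hcont : Continuous fun t : ℝ => exp (-t ^ 2 / 2) := by fun_prop
  have hFTC : HasDerivAt (fun y => ∫ t in (0 : ℝ)..y, exp (-t ^ 2 / 2)) (exp (-x ^ 2 / 2)) x :=
    intervalIntegral.integral_hasDerivAt_right integrable_exp_neg_sq_div_two.intervalIntegrable
      (hcont.stronglyMeasurableAtFilter _ _) hcont.continuousAt
  have hsplit : Phi = fun y =>
      sqrt (exp 1) * ((∫ t in Iic 0, exp (-t ^ 2 / 2)) + ∫ t in (0 : ℝ)..y, exp (-t ^ 2 / 2)) := by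
    ext y
    rw [Phi, ← intervalIntegral.integral_Iic_sub_Iic (hint 0) (hint y)]
    ring
  rw [hsplit]
  exact (hFTC.const_add _).const_mul _

lemma abs_phi_le (x : ℝ) : |Phi x| ≤ 6 := by
  have hnonneg : 0 ≤ ∫ t in Iic x, exp (-t ^ 2 / 2) :=
    MeasureTheory.setIntegral_nonneg measurableSet_Iic fun t _ => (exp_pos _).le
  have hle : ∫ t in Iic x, exp (-t ^ 2 / 2) ≤ ∫ t, exp (-t ^ 2 / 2) :=
    MeasureTheory.setIntegral_le_integral integrable_exp_neg_sq_div_two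
      (Eventually.of_forall fun t => (exp_pos _).le)
  have htotal : ∫ t, exp (-t ^ 2 / 2) ≤ 3 := by
    have h : ∫ t, exp (-t ^ 2 / 2) = sqrt (π / (1 / 2)) := by
      rw [← integral_gaussian]
      congr 1 with t
      ring_nf
    rw [h]
    exact Real.sqrt_le_iff.2 ⟨by norm_num, by linarith [pi_lt_d2]⟩
  rw [Phi, abs_mul, abs_of_nonneg (sqrt_nonneg _), abs_of_nonneg hnonneg]
  nlinarith [sqrt_exp_one_le_two, sqrt_nonneg (exp 1)]

lemma abs_mul_exp_neg_sq_div_two_le_one (x : ℝ) : |x| * exp (-x ^ 2 / 2) ≤ 1 := by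
  have h : |x| ≤ exp (x ^ 2 / 2) := by
    nlinarith [add_one_le_exp (x ^ 2 / 2), sq_abs x, sq_nonneg (|x| - 1)]
  rw [neg_div, exp_neg, ← div_eq_mul_inv]
  exact div_le_one_of_le₀ h (exp_pos _).le

lemma bddC2_phi : BddC2 6 Phi phiDeriv (fun x => -x * phiDeriv x) where
  hasDerivAt := hasDerivAt_phi
  hasDerivAt_deriv x := by
    have h := (((hasDerivAt_pow 2 x).neg.div_const 2).exp).const_mul (sqrt (exp 1))
    exact h.congr_deriv (by simp only [phiDeriv, Pi.neg_apply]; push_cast; ring)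
  abs_le := abs_phi_le
  abs_deriv_le x := by
    have h : exp (-x ^ 2 / 2) ≤ 1 := exp_le_one_iff.2 (by nlinarith [sq_nonneg x])
    rw [phiDeriv, abs_mul, abs_of_nonneg (sqrt_nonneg _), abs_of_pos (exp_pos _)]
    nlinarith [sqrt_exp_one_le_two, sqrt_nonneg (exp 1), exp_pos (-x ^ 2 / 2)]
  abs_deriv2_le x := by
    have h := abs_mul_exp_neg_sq_div_two_le_one x
    rw [phiDeriv, abs_mul, abs_neg, abs_mul, abs_of_nonneg (sqrt_nonneg _),
      abs_of_pos (exp_pos _), mul_left_comm]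
    nlinarith [sqrt_exp_one_le_two, sqrt_nonneg (exp 1), exp_pos (-x ^ 2 / 2)]

section PairSum

variable {ι κ : Type*} [Fintype ι] [DecidableEq ι] [Fintype κ]

local notation "E" => EuclideanSpace ℝ ι

lemma norm_sq_sum_single {e : κ → ι} (he : Function.Injective e) (c : κ → ℝ) :
    ‖∑ j, EuclideanSpace.single (e j) (c j)‖ ^ 2 = ∑ j, c j ^ 2 := by
  have hv := (EuclideanSpace.orthonormal_single (𝕜 := ℝ) (ι := ι)).comp e he
  have h := hv.inner_sum c c Finset.univ
  have hs : ∀ j, c j • EuclideanSpace.single (e j) (1 : ℝ) = EuclideanSpace.single (e j) (c j) :=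
    fun j => by ext i; simp [PiLp.single_apply]
  simp only [Function.comp_apply, hs, conj_trivial, real_inner_self_eq_norm_sq] at h
  simpa [sq] using h

lemma sum_sq_apply_le_norm_sq {e : κ → ι} (he : Function.Injective e) (x : E) :
    ∑ j, x (e j) ^ 2 ≤ ‖x‖ ^ 2 := by
  have h := ((EuclideanSpace.orthonormal_single (𝕜 := ℝ) (ι := ι)).comp e he).sum_inner_products_le
    x (s := Finset.univ)
  simpa [EuclideanSpace.inner_single_left] using h

lemma norm_sum_single_le {e p q : κ → ι} (he : Function.Injective e)
    (hp : Function.Injective p) (hq : Function.Injective q) {C : ℝ} (hC : 0 ≤ C) {c : κ → ℝ}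
    {x : E} (hc : ∀ j, |c j| ≤ C * (|x (p j)| + |x (q j)|)) :
    ‖∑ j, EuclideanSpace.single (e j) (c j)‖ ≤ 2 * C * ‖x‖ := by
  refine le_of_pow_le_pow_left₀ two_ne_zero (by positivity) ?_
  have hj : ∀ j, c j ^ 2 ≤ 2 * C ^ 2 * (x (p j) ^ 2 + x (q j) ^ 2) := fun j => by
    have h := pow_le_pow_left₀ (abs_nonneg _) (hc j) 2
    rw [sq_abs] at h
    nlinarith [sq_abs (x (p j)), sq_abs (x (q j)),
      mul_nonneg (sq_nonneg C) (sq_nonneg (|x (p j)| - |x (q j)|))]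
  calc ‖∑ j, EuclideanSpace.single (e j) (c j)‖ ^ 2 = ∑ j, c j ^ 2 := norm_sq_sum_single he c
    _ ≤ ∑ j, 2 * C ^ 2 * (x (p j) ^ 2 + x (q j) ^ 2) := Finset.sum_le_sum fun j _ => hj j
    _ = 2 * C ^ 2 * (∑ j, x (p j) ^ 2 + ∑ j, x (q j) ^ 2) := by
      rw [← Finset.mul_sum, Finset.sum_add_distrib]
    _ ≤ 2 * C ^ 2 * (‖x‖ ^ 2 + ‖x‖ ^ 2) := by
      gcongr
      exacts [sum_sq_apply_le_norm_sq hp x, sum_sq_apply_le_norm_sq hq x]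
    _ = (2 * C * ‖x‖) ^ 2 := by ring

lemma norm_single_sub_single_le {f : ℝ → ℝ} {C : ℝ} (hC : 0 ≤ C)
    (hf : ∀ s s', |f s - f s'| ≤ C * |s - s'|) (i : ι) (u v : E) :
    ‖EuclideanSpace.single i (f (u i)) - EuclideanSpace.single i (f (v i))‖ ≤ C * ‖u - v‖ := by
  rw [← PiLp.single_sub, PiLp.norm_single, Real.norm_eq_abs]
  exact (hf _ _).trans (mul_le_mul_of_nonneg_left (PiLp.norm_apply_le (u - v) i) hC)

noncomputable def pairSum (p q : κ → ι) (h : ℝ → ℝ → ℝ) (w : E) : ℝ := ∑ j, h (w (p j)) (w (q j))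

noncomputable def pairSumGrad (p q : κ → ι) (h₁ h₂ : ℝ → ℝ → ℝ) (w : E) : E :=
  ∑ j, (EuclideanSpace.single (p j) (h₁ (w (p j)) (w (q j)))
    + EuclideanSpace.single (q j) (h₂ (w (p j)) (w (q j))))

lemma hasGradientAt_pairSum {p q : κ → ι} {h h₁ h₂ : ℝ → ℝ → ℝ}
    (hh : ∀ s t, HasFDerivAt (fun x : ℝ × ℝ => h x.1 x.2)
      (h₁ s t • ContinuousLinearMap.fst ℝ ℝ ℝ + h₂ s t • ContinuousLinearMap.snd ℝ ℝ ℝ) (s, t))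
    (w : E) : HasGradientAt (pairSum p q h) (pairSumGrad p q h₁ h₂ w) w := by
  rw [hasGradientAt_iff_hasFDerivAt]
  have hj : ∀ j, HasFDerivAt (fun v : E => h (v (p j)) (v (q j)))
      ((h₁ (w (p j)) (w (q j)) • ContinuousLinearMap.fst ℝ ℝ ℝ
        + h₂ (w (p j)) (w (q j)) • ContinuousLinearMap.snd ℝ ℝ ℝ).comp
        ((EuclideanSpace.proj (𝕜 := ℝ) (p j)).prod (EuclideanSpace.proj (q j)))) w :=
    fun j => HasFDerivAt.comp (g := fun x : ℝ × ℝ => h x.1 x.2) w (hh (w (p j)) (w (q j)))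
      ((EuclideanSpace.proj (𝕜 := ℝ) (p j)).prod (EuclideanSpace.proj (q j))).hasFDerivAt
  refine (HasFDerivAt.fun_sum fun j _ => hj j).congr_fderiv ?_
  ext v
  simp [pairSumGrad, EuclideanSpace.inner_single_left]

lemma norm_pairSumGrad_sub_le {p q : κ → ι} (hp : Function.Injective p)
    (hq : Function.Injective q) {h₁ h₂ : ℝ → ℝ → ℝ} {C : ℝ} (hC : 0 ≤ C)
    (h₁_lip : ∀ s t s' t', |h₁ s t - h₁ s' t'| ≤ C * (|s - s'| + |t - t'|))
    (h₂_lip : ∀ s t s' t', |h₂ s t - h₂ s' t'| ≤ C * (|s - s'| + |t - t'|)) (u v : E) :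
    ‖pairSumGrad p q h₁ h₂ u - pairSumGrad p q h₁ h₂ v‖ ≤ 4 * C * ‖u - v‖ := by
  have hsplit : pairSumGrad p q h₁ h₂ u - pairSumGrad p q h₁ h₂ v
      = ∑ j, EuclideanSpace.single (p j)
          (h₁ (u (p j)) (u (q j)) - h₁ (v (p j)) (v (q j)))
        + ∑ j, EuclideanSpace.single (q j)
          (h₂ (u (p j)) (u (q j)) - h₂ (v (p j)) (v (q j))) := by
    rw [pairSumGrad, pairSumGrad, ← Finset.sum_sub_distrib, ← Finset.sum_add_distrib]
    refine Finset.sum_congr rfl fun j _ => ?_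
    simp only [EuclideanSpace.single, PiLp.single_sub]
    abel
  rw [hsplit]
  calc _ ≤ 2 * C * ‖u - v‖ + 2 * C * ‖u - v‖ :=
        (norm_add_le _ _).trans <| add_le_add
          (norm_sum_single_le hp hp hq hC fun j => by simpa using h₁_lip _ _ _ _)
          (norm_sum_single_le hq hp hq hC fun j => by simpa using h₂_lip _ _ _ _)
    _ = 4 * C * ‖u - v‖ := by ring

end PairSum

lemma HasGradientAt.add {F : Type*} [NormedAddCommGroup F] [InnerProductSpace ℝ F]
    [CompleteSpace F] {f g : F → ℝ} {f' g' x : F} (hf : HasGradientAt f f' x)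
    (hg : HasGradientAt g g' x) : HasGradientAt (fun y => f y + g y) (f' + g') x := by
  rw [hasGradientAt_iff_hasFDerivAt] at hf hg ⊢
  rw [map_add]
  exact hf.add hg

lemma hasGradientAt_comp_apply {ι : Type*} [Fintype ι] [DecidableEq ι] {f f' : ℝ → ℝ}
    (hf : ∀ s, HasDerivAt f (f' s) s) (i : ι) (w : EuclideanSpace ℝ ι) :
    HasGradientAt (fun v : EuclideanSpace ℝ ι => f (v i))
      (EuclideanSpace.single i (f' (w i))) w := by
  rw [hasGradientAt_iff_hasFDerivAt]
  refine ((hf (w i)).comp_hasFDerivAt w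
    (EuclideanSpace.proj (𝕜 := ℝ) i).hasFDerivAt).congr_fderiv ?_
  ext v
  simp [EuclideanSpace.inner_single_left]

lemma hasFDerivAt_mul_fst_snd {f f' g g' : ℝ → ℝ} (hf : ∀ s, HasDerivAt f (f' s) s)
    (hg : ∀ t, HasDerivAt g (g' t) t) (s t : ℝ) :
    HasFDerivAt (fun x : ℝ × ℝ => f x.1 * g x.2)
      ((f' s * g t) • ContinuousLinearMap.fst ℝ ℝ ℝ
        + (f s * g' t) • ContinuousLinearMap.snd ℝ ℝ ℝ) (s, t) := by
  refine (((hf s).comp_hasFDerivAt (s, t) hasFDerivAt_fst).mul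
    ((hg t).comp_hasFDerivAt (s, t) hasFDerivAt_snd)).congr_fderiv ?_
  ext <;> simp [mul_comm]

noncomputable def chainTerm (s t : ℝ) : ℝ := Psi (-s) * Phi (-t) - Psi s * Phi t

noncomputable def chainTerm₁ (s t : ℝ) : ℝ := -psiDeriv (-s) * Phi (-t) - psiDeriv s * Phi t

noncomputable def chainTerm₂ (s t : ℝ) : ℝ := Psi (-s) * -phiDeriv (-t) - Psi s * phiDeriv t

lemma hasFDerivAt_chainTerm (s t : ℝ) :
    HasFDerivAt (fun x : ℝ × ℝ => chainTerm x.1 x.2)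
      (chainTerm₁ s t • ContinuousLinearMap.fst ℝ ℝ ℝ
        + chainTerm₂ s t • ContinuousLinearMap.snd ℝ ℝ ℝ) (s, t) := by
  have h₁ := hasFDerivAt_mul_fst_snd bddC2_psi.comp_neg.hasDerivAt bddC2_phi.comp_neg.hasDerivAt s t
  have h₂ := hasFDerivAt_mul_fst_snd bddC2_psi.hasDerivAt bddC2_phi.hasDerivAt s t
  refine (h₁.sub h₂).congr_fderiv ?_
  rw [chainTerm₁, chainTerm₂]
  module

lemma abs_sub_sub_sub_le (a b a' b' : ℝ) : |(a - b) - (a' - b')| ≤ |a - a'| + |b - b'| := by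
  rw [show (a - b) - (a' - b') = (a - a') - (b - b') by ring]
  exact abs_sub _ _

lemma abs_chainTerm₁_sub_le (s t s' t' : ℝ) :
    |chainTerm₁ s t - chainTerm₁ s' t'| ≤ 2 * (36288 * 6) * (|s - s'| + |t - t'|) := by
  have h₁ := bddC2_psi.comp_neg.abs_deriv_mul_sub_le bddC2_phi.comp_neg s t s' t'
  have h₂ := bddC2_psi.abs_deriv_mul_sub_le bddC2_phi s t s' t'
  have h := abs_sub_sub_sub_le (-psiDeriv (-s) * Phi (-t)) (psiDeriv s * Phi t)
    (-psiDeriv (-s') * Phi (-t')) (psiDeriv s' * Phi t')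
  rw [chainTerm₁, chainTerm₁]
  linarith

lemma abs_chainTerm₂_sub_le (s t s' t' : ℝ) :
    |chainTerm₂ s t - chainTerm₂ s' t'| ≤ 2 * (36288 * 6) * (|s - s'| + |t - t'|) := by
  have h₁ := bddC2_psi.comp_neg.abs_mul_deriv_sub_le bddC2_phi.comp_neg s t s' t'
  have h₂ := bddC2_psi.abs_mul_deriv_sub_le bddC2_phi s t s' t'
  have h := abs_sub_sub_sub_le (Psi (-s) * -phiDeriv (-t)) (Psi s * phiDeriv t)
    (Psi (-s') * -phiDeriv (-t')) (Psi s' * phiDeriv t')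
  rw [chainTerm₂, chainTerm₂]
  linarith

noncomputable def couplingTerm (s t : ℝ) : ℝ := 6 * (s - 1 / 2 * t) ^ 2

lemma hasFDerivAt_couplingTerm (s t : ℝ) :
    HasFDerivAt (fun x : ℝ × ℝ => couplingTerm x.1 x.2)
      ((12 * (s - 1 / 2 * t)) • ContinuousLinearMap.fst ℝ ℝ ℝ
        + (-6 * (s - 1 / 2 * t)) • ContinuousLinearMap.snd ℝ ℝ ℝ) (s, t) := by
  refine (((hasFDerivAt_fst.sub (hasFDerivAt_snd.const_mul (1 / 2))).pow 2).const_mul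
    6).congr_fderiv ?_
  ext <;> simp <;> ring

lemma abs_mul_sub_half_mul_sub_le {c C : ℝ} (hc : |c| ≤ C) (s t s' t' : ℝ) :
    |c * (s - 1 / 2 * t) - c * (s' - 1 / 2 * t')| ≤ C * (|s - s'| + |t - t'|) := by
  rw [← mul_sub, abs_mul,
    show s - 1 / 2 * t - (s' - 1 / 2 * t') = (s - s') - 1 / 2 * (t - t') by ring]
  refine mul_le_mul hc ((abs_sub _ _).trans ?_) (abs_nonneg _) ((abs_nonneg _).trans hc)
  rw [abs_mul, abs_of_pos (by norm_num : (0 : ℝ) < 1 / 2)]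
  linarith [abs_nonneg (t - t')]

section fmE

variable (T : ℕ)

def inlSucc (j : Fin (T - 1)) : Fin T ⊕ Fin (T - 1) :=
  Sum.inl ⟨(j : ℕ) + 1, by have := j.isLt; omega⟩

def inlCast (j : Fin (T - 1)) : Fin T ⊕ Fin (T - 1) :=
  Sum.inl ⟨(j : ℕ), by have := j.isLt; omega⟩

lemma inlSucc_injective : Function.Injective (inlSucc T) := fun a b h => by
  simpa [inlSucc, Fin.ext_iff] using h

lemma inlCast_injective : Function.Injective (inlCast T) := fun a b h => by
  simpa [inlCast, Fin.ext_iff] using h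

variable (hT : 2 ≤ T)

def inlZero : Fin T ⊕ Fin (T - 1) := Sum.inl ⟨0, by omega⟩

lemma fmE_eq : fmE T hT = fun w => -Psi 1 * Phi (w (inlZero T hT))
    + pairSum Sum.inr (inlSucc T) chainTerm w + pairSum (inlCast T) Sum.inr couplingTerm w := by
  ext w
  rw [fmE, pairSum, pairSum, Finset.mul_sum]
  rfl

noncomputable def fmEGrad (w : EuclideanSpace ℝ (Fin T ⊕ Fin (T - 1))) :
    EuclideanSpace ℝ (Fin T ⊕ Fin (T - 1)) :=
  EuclideanSpace.single (inlZero T hT) (-Psi 1 * phiDeriv (w (inlZero T hT)))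
    + pairSumGrad Sum.inr (inlSucc T) chainTerm₁ chainTerm₂ w
    + pairSumGrad (inlCast T) Sum.inr (fun s t => 12 * (s - 1 / 2 * t))
        (fun s t => -6 * (s - 1 / 2 * t)) w

lemma hasGradientAt_fmE (w : EuclideanSpace ℝ (Fin T ⊕ Fin (T - 1))) :
    HasGradientAt (fmE T hT) (fmEGrad T hT w) w := by
  rw [fmE_eq]
  exact ((hasGradientAt_comp_apply (fun s => (bddC2_phi.hasDerivAt s).const_mul (-Psi 1)) _ w).add
    (hasGradientAt_pairSum hasFDerivAt_chainTerm w)).add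
    (hasGradientAt_pairSum hasFDerivAt_couplingTerm w)

lemma norm_fmEGrad_sub_le (u v : EuclideanSpace ℝ (Fin T ⊕ Fin (T - 1))) :
    ‖fmEGrad T hT u - fmEGrad T hT v‖ ≤ 2 * 10 ^ 6 * ‖u - v‖ := by
  have hsplit : ∀ (a b c a' b' c' : EuclideanSpace ℝ (Fin T ⊕ Fin (T - 1))),
      (a + b + c) - (a' + b' + c') = (a - a') + (b - b') + (c - c') := fun _ _ _ _ _ _ => by abel
  have h₀ : ‖EuclideanSpace.single (inlZero T hT) (-Psi 1 * phiDeriv (u (inlZero T hT)))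
      - EuclideanSpace.single (inlZero T hT) (-Psi 1 * phiDeriv (v (inlZero T hT)))‖
      ≤ 36288 * 6 * ‖u - v‖ := by
    refine norm_single_sub_single_le (f := fun s => -Psi 1 * phiDeriv s) (by norm_num)
      (fun s s' => ?_) _ u v
    rw [← mul_sub, abs_mul, abs_neg, mul_assoc]
    exact mul_le_mul (bddC2_psi.abs_le 1) (bddC2_phi.abs_deriv_sub_le s s') (abs_nonneg _)
        (by norm_num)
  have h₁ := norm_pairSumGrad_sub_le Sum.inr_injective (inlSucc_injective T) (by norm_num)
    abs_chainTerm₁_sub_le abs_chainTerm₂_sub_le u v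
  have h₂ := norm_pairSumGrad_sub_le (inlCast_injective T) Sum.inr_injective (by norm_num)
    (abs_mul_sub_half_mul_sub_le (c := 12) (by norm_num))
    (abs_mul_sub_half_mul_sub_le (c := -6) (C := 12) (by norm_num)) u v
  rw [fmEGrad, fmEGrad, hsplit]
  refine (norm_add₃_le).trans ?_
  linarith [norm_nonneg (u - v)]

end fmE

/-- there is a numerical constant `ℓ_m ≥ 1`, independent of `T`, such that
`f̄_m` is `ℓ_m`-smooth: its gradient is `ℓ_m`-Lipschitz in Euclidean norm. -/
theorem stmt_14 :
    ∃ ℓm : ℝ, 1 ≤ ℓm ∧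
      ∀ (T : ℕ) (hT : 2 ≤ T) (u v : EuclideanSpace ℝ (Fin T ⊕ Fin (T - 1))),
        ‖gradient (fmE T hT) u - gradient (fmE T hT) v‖ ≤ ℓm * ‖u - v‖ := by
  refine ⟨2 * 10 ^ 6, by norm_num, fun T hT u v => ?_⟩
  rw [(hasGradientAt_fmE T hT u).gradient, (hasGradientAt_fmE T hT v).gradient]
  exact norm_fmEGrad_sub_le T hT u v
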